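/- arXiv:2104.07974 — 8 statements merged into one kernel-verified Lean document; each statement's English description precedes it below -/
import Mathlib

section
/- Let {I_1,…,I_k} be a k-clustering of A of cost at most B and let i ∈ {1,…,k} be such that |I_i| ≥ 2B+1. If c_1,…,c_k ∈ Σ^m and c'_1,…,c'_k ∈ Σ^m are two families of vectors each satisfying Σ_{h=1}^k Σ_{j∈I_h} d_H(·_h, a_j) ≤ B, then c_i = c'_i; i.e., the median of a cluster of size at least 2B+1 is unique. -/
/-! Two centres `x ≠ y` are at Hamming distance at least one, so by the triangle inequality every
point of the cluster contributes at least one to the sum of the two costs. A cluster of size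
`2B+1` thus forces the two costs, each at most `B`, to add up to at least `2B+1`. -/

open Finset

section HammingCost

variable {ι κ : Type*} [Fintype ι] {β : ι → Type*} [∀ t, DecidableEq (β t)]

theorem card_mul_hammingDist_le_sum_add_sum (s : Finset κ) (a : κ → ∀ t, β t) (x y : ∀ t, β t) :
    #s * hammingDist x y ≤ ∑ j ∈ s, hammingDist x (a j) + ∑ j ∈ s, hammingDist y (a j) := by
  rw [← sum_add_distrib, ← smul_eq_mul, ← sum_const]
  refine sum_le_sum fun j _ => ?_
  rw [hammingDist_comm y]
  exact hammingDist_triangle x (a j) y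

theorem eq_of_sum_hammingDist_le {s : Finset κ} {B : ℕ} (hs : 2 * B + 1 ≤ #s)
    (a : κ → ∀ t, β t) {x y : ∀ t, β t}
    (hx : ∑ j ∈ s, hammingDist x (a j) ≤ B) (hy : ∑ j ∈ s, hammingDist y (a j) ≤ B) :
    x = y := by
  by_contra hxy
  have hpos : 1 ≤ hammingDist x y := hammingDist_pos.mpr hxy
  have := card_mul_hammingDist_le_sum_add_sum s a x y
  have := Nat.le_mul_of_pos_right #s hpos
  omega

end HammingCost

theorem big_cluster_median_unique_general
    {α : Type*} [DecidableEq α]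
    (m n k B : ℕ)
    (a : Fin n → Fin m → α)
    (I : Fin k → Finset (Fin n))
    (i : Fin k) (hsize : 2 * B + 1 ≤ (I i).card) :
    ∀ c c' : Fin k → Fin m → α,
      (∑ h, ∑ j ∈ I h, hammingDist (c h) (a j)) ≤ B →
      (∑ h, ∑ j ∈ I h, hammingDist (c' h) (a j)) ≤ B →
      c i = c' i := by
  intro c c' hc hc'
  have cluster_cost_le {d : Fin k → Fin m → α}
      (hd : ∑ h, ∑ j ∈ I h, hammingDist (d h) (a j) ≤ B) :
      ∑ j ∈ I i, hammingDist (d i) (a j) ≤ B :=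
    (single_le_sum (f := fun h => ∑ j ∈ I h, hammingDist (d h) (a j))
      (fun _ _ => Nat.zero_le _) (mem_univ i)).trans hd
  exact eq_of_sum_hammingDist_le hsize a (cluster_cost_le hc) (cluster_cost_le hc')

/-- The median of a cluster of size at least `2B+1` in a `k`-clustering of
cost at most `B` is unique. -/
theorem big_cluster_median_unique
    {α : Type*} [Fintype α] [Nonempty α] [DecidableEq α]
    (m n k B : ℕ) (hm : 0 < m) (hn : 0 < n) (hk : 0 < k)
    (a : Fin n → Fin m → α)
    (I : Fin k → Finset (Fin n))
    (hdisj : ∀ i j : Fin k, i ≠ j → Disjoint (I i) (I j))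
    (hcover : ∀ x : Fin n, ∃ i, x ∈ I i)
    (hcost : ∃ c : Fin k → Fin m → α,
      ∑ i, ∑ j ∈ I i, hammingDist (c i) (a j) ≤ B)
    (i : Fin k) (hsize : 2 * B + 1 ≤ (I i).card) :
    ∀ c c' : Fin k → Fin m → α,
      (∑ h, ∑ j ∈ I h, hammingDist (c h) (a j)) ≤ B →
      (∑ h, ∑ j ∈ I h, hammingDist (c' h) (a j)) ≤ B →
      c i = c' i :=
  big_cluster_median_unique_general m n k B a I i hsize
end

section
/- Let {I_1,…,I_k} be a k-clustering of A of cost at most B, and let J_1,…,J_s be the initial clusters of A. Then the number of indices p ∈ {1,…,s} such that J_p has nonempty intersection with at least one composite cluster of {I_1,…,I_k} is at most 2B. -/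
/-!
Each initial cluster meeting a cluster `I` is determined by the value of a column it shares
with `I`, so at most `d(I)` initial clusters meet `I`, where `d(I)` is the number of distinct
columns in `I`. Each of them other than the centre costs at least one unit, so `d(I) ≤ cost(I) + 1`,
and this is at most `2 cost(I)` once `I` is composite, since then `cost(I) ≥ 1`. Summing over
composite clusters gives the bound `2B`.
-/

open Finset

section Hamming

variable {ι κ β : Type*} [Fintype κ] [DecidableEq β] [DecidableEq (κ → β)]

theorem card_image_le_sum_hammingDist_add_one (s : Finset ι) (v : ι → κ → β) (c : κ → β) :
    #(s.image v) ≤ ∑ j ∈ s, hammingDist c (v j) + 1 := by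
  have hsub : s.image v ⊆ insert c ({j ∈ s | v j ≠ c}.image v) := by
    intro w hw
    obtain ⟨j, hj, rfl⟩ := mem_image.mp hw
    by_cases hjc : v j = c
    · exact hjc ▸ mem_insert_self _ _
    · exact mem_insert_of_mem (mem_image_of_mem v (mem_filter.mpr ⟨hj, hjc⟩))
  have hmoved : #{j ∈ s | v j ≠ c} ≤ ∑ j ∈ s, hammingDist c (v j) :=
    calc #{j ∈ s | v j ≠ c} = ∑ j ∈ s with v j ≠ c, 1 := card_eq_sum_ones _
      _ ≤ ∑ j ∈ s with v j ≠ c, hammingDist c (v j) :=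
          sum_le_sum fun j hj => hammingDist_pos.mpr (mem_filter.mp hj).2.symm
      _ ≤ ∑ j ∈ s, hammingDist c (v j) := sum_le_sum_of_subset (filter_subset _ _)
  calc #(s.image v) ≤ #({j ∈ s | v j ≠ c}.image v) + 1 :=
        (card_le_card hsub).trans (card_insert_le _ _)
    _ ≤ #{j ∈ s | v j ≠ c} + 1 := by gcongr; exact card_image_le
    _ ≤ ∑ j ∈ s, hammingDist c (v j) + 1 := by gcongr

theorem card_image_le_two_mul_sum_hammingDist {s : Finset ι} {v : ι → κ → β}
    (hs : ∃ x ∈ s, ∃ y ∈ s, v x ≠ v y) (c : κ → β) :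
    #(s.image v) ≤ 2 * ∑ j ∈ s, hammingDist c (v j) := by
  have htwo : 1 < #(s.image v) := by
    obtain ⟨x, hx, y, hy, hxy⟩ := hs
    exact one_lt_card.mpr ⟨v x, mem_image_of_mem v hx, v y, mem_image_of_mem v hy, hxy⟩
  have := card_image_le_sum_hammingDist_add_one s v c
  omega

end Hamming

section Classes

variable {σ ι γ : Type*} {J : σ → Finset ι} {a : ι → γ}

theorem eq_of_mem_of_mem_of_apply_eq
    (hJclass : ∀ p, ∀ x ∈ J p, ∀ y, y ∈ J p ↔ a y = a x)
    (hJdisj : ∀ p q, p ≠ q → Disjoint (J p) (J q))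
    {p q : σ} {x y : ι} (hx : x ∈ J p) (hy : y ∈ J q) (hxy : a x = a y) : p = q := by
  by_contra hpq
  exact disjoint_left.mp (hJdisj p q hpq) ((hJclass p x hx y).mpr hxy.symm) hy

theorem card_filter_inter_nonempty_le_card_image [Fintype σ] [DecidableEq ι] [DecidableEq γ]
    (hJclass : ∀ p, ∀ x ∈ J p, ∀ y, y ∈ J p ↔ a y = a x)
    (hJdisj : ∀ p q, p ≠ q → Disjoint (J p) (J q)) (t : Finset ι) :
    #{p | (J p ∩ t).Nonempty} ≤ #(t.image a) := by
  refine card_le_card_of_forall_subsingleton (fun p w => ∃ x ∈ J p ∩ t, a x = w) ?_ ?_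
  · intro p hp
    obtain ⟨x, hx⟩ := (mem_filter.mp hp).2
    exact ⟨a x, mem_image_of_mem a (mem_inter.mp hx).2, x, hx, rfl⟩
  · rintro w - p ⟨-, x, hx, rfl⟩ q ⟨-, y, hy, hyx⟩
    exact eq_of_mem_of_mem_of_apply_eq hJclass hJdisj
      (mem_inter.mp hx).1 (mem_inter.mp hy).1 hyx.symm

end Classes

theorem initial_clusters_meeting_composite_at_most_2B_general
    {α : Type*} [DecidableEq α]
    (m n k s B : ℕ)
    (a : Fin n → Fin m → α)
    -- the initial clusters J_1, ..., J_s of A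
    (J : Fin s → Finset (Fin n))
    (hJclass : ∀ p, ∀ x ∈ J p, ∀ y : Fin n, (y ∈ J p ↔ a y = a x))
    (hJdisj : ∀ p q : Fin s, p ≠ q → Disjoint (J p) (J q))
    -- a k-clustering of cost at most B
    (I : Fin k → Finset (Fin n))
    (hcost : ∃ c : Fin k → Fin m → α,
      ∑ i, ∑ j ∈ I i, hammingDist (c i) (a j) ≤ B) :
    {p : Fin s | ∃ i : Fin k,
      (∃ h ∈ I i, ∃ j ∈ I i, a h ≠ a j) ∧ (J p ∩ I i).Nonempty}.ncard ≤ 2 * B := by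
  classical
  obtain ⟨c, hc⟩ := hcost
  set composite : Finset (Fin k) := {i | ∃ h ∈ I i, ∃ j ∈ I i, a h ≠ a j}
  have hset : {p : Fin s | ∃ i : Fin k,
      (∃ h ∈ I i, ∃ j ∈ I i, a h ≠ a j) ∧ (J p ∩ I i).Nonempty} =
      ↑(composite.biUnion fun i => ({p | (J p ∩ I i).Nonempty} : Finset (Fin s))) := by
    ext p; simp [composite]
  rw [hset, Set.ncard_coe_finset]
  calc _ ≤ ∑ i ∈ composite, #({p | (J p ∩ I i).Nonempty} : Finset (Fin s)) := card_biUnion_le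
    _ ≤ ∑ i ∈ composite, 2 * ∑ j ∈ I i, hammingDist (c i) (a j) := by
        refine sum_le_sum fun i hi => ?_
        exact (card_filter_inter_nonempty_le_card_image hJclass hJdisj (I i)).trans
          (card_image_le_two_mul_sum_hammingDist (mem_filter.mp hi).2 (c i))
    _ ≤ 2 * ∑ i, ∑ j ∈ I i, hammingDist (c i) (a j) := by
        rw [← mul_sum]; gcongr; exact subset_univ _
    _ ≤ 2 * B := by omega

/-- For a `k`-clustering of cost at most `B`, at most `2B` initial clusters
have nonempty intersection with some composite cluster. -/
theorem initial_clusters_meeting_composite_at_most_2B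
    {α : Type*} [Fintype α] [Nonempty α] [DecidableEq α]
    (m n k s B : ℕ) (hm : 0 < m) (hn : 0 < n) (hk : 0 < k)
    (a : Fin n → Fin m → α)
    -- the initial clusters J_1, ..., J_s of A
    (J : Fin s → Finset (Fin n))
    (hJne : ∀ p, (J p).Nonempty)
    (hJclass : ∀ p, ∀ x ∈ J p, ∀ y : Fin n, (y ∈ J p ↔ a y = a x))
    (hJdisj : ∀ p q : Fin s, p ≠ q → Disjoint (J p) (J q))
    (hJcover : ∀ x : Fin n, ∃ p, x ∈ J p)
    -- a k-clustering of cost at most B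
    (I : Fin k → Finset (Fin n))
    (hdisj : ∀ i j : Fin k, i ≠ j → Disjoint (I i) (I j))
    (hcover : ∀ x : Fin n, ∃ i, x ∈ I i)
    (hcost : ∃ c : Fin k → Fin m → α,
      ∑ i, ∑ j ∈ I i, hammingDist (c i) (a j) ≤ B) :
    {p : Fin s | ∃ i : Fin k,
      (∃ h ∈ I i, ∃ j ∈ I i, a h ≠ a j) ∧ (J p ∩ I i).Nonempty}.ncard ≤ 2 * B :=
  initial_clusters_meeting_composite_at_most_2B_general m n k s B a J hJclass hJdisj I hcost
end

section
/- Let p and q be positive integers with p ≤ q, let h be a positive integer, and let X be a finite set. Then X can be partitioned into h pairwise disjoint subsets whose union is X, each of size at least p and at most q, if and only if ⌈|X|/q⌉ ≤ h ≤ ⌊|X|/p⌋. -/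
/-!
Counting elements block by block gives `h * p ≤ |X| ≤ h * q` for any such partition. Conversely,
an equipartition of `X` into `h` blocks has blocks of size `⌊|X| / h⌋` or `⌈|X| / h⌉`, and both
lie in `[p, q]` when `h * p ≤ |X| ≤ h * q`.
-/

open Finset Function

section Floor

variable {K : Type*} [Field K] [LinearOrder K] [IsStrictOrderedRing K] [FloorRing K]

theorem Int.ceil_natCast_div_le_natCast_iff {n q h : ℕ} (hq : 0 < q) :
    ⌈(n : K) / q⌉ ≤ (h : ℤ) ↔ n ≤ h * q := by
  rw [Int.ceil_le, div_le_iff₀ (by exact_mod_cast hq)]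
  norm_cast

theorem Int.natCast_le_floor_natCast_div_iff {n p h : ℕ} (hp : 0 < p) :
    (h : ℤ) ≤ ⌊(n : K) / p⌋ ↔ h * p ≤ n := by
  rw [Int.le_floor, le_div_iff₀ (by exact_mod_cast hp)]
  norm_cast

end Floor

section Partition

variable {α : Type*} [DecidableEq α]

theorem Finset.card_mul_le_card_biUnion_le_card_mul {ι : Type*} [Fintype ι] {P : ι → Finset α}
    {p q : ℕ} (hP : Pairwise (Disjoint on P)) (hcard : ∀ i, p ≤ #(P i) ∧ #(P i) ≤ q) :
    Fintype.card ι * p ≤ #(univ.biUnion P) ∧ #(univ.biUnion P) ≤ Fintype.card ι * q := by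
  rw [card_biUnion fun i _ j _ hij ↦ hP hij]
  exact ⟨by simpa using card_nsmul_le_sum univ _ p fun i _ ↦ (hcard i).1,
    by simpa using sum_le_card_nsmul univ _ q fun i _ ↦ (hcard i).2⟩

namespace Finpartition

variable {s t : Finset α} {P : Finpartition s}

theorem exists_fin_enum_parts {h : ℕ} (hP : #P.parts = h) :
    ∃ Q : Fin h → Finset α, Pairwise (Disjoint on Q) ∧ univ.biUnion Q = s ∧ ∀ i, Q i ∈ P.parts := by
  let e := P.parts.equivFinOfCardEq hP
  refine ⟨fun i ↦ (e.symm i).1, fun i j hij ↦ ?_, ?_, fun i ↦ (e.symm i).2⟩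
  · exact P.disjoint (e.symm i).2 (e.symm j).2 fun h ↦ hij (e.symm.injective (Subtype.ext h))
  · ext x
    simp only [mem_biUnion, mem_univ, true_and]
    refine ⟨fun ⟨i, hx⟩ ↦ P.le (e.symm i).2 hx, fun hx ↦ ?_⟩
    obtain ⟨t, ht, hxt⟩ := P.exists_mem hx
    exact ⟨e ⟨t, ht⟩, by simpa using hxt⟩

theorem IsEquipartition.le_card_part {p : ℕ} (hP : P.IsEquipartition) (ht : t ∈ P.parts)
    (hp : #P.parts * p ≤ #s) : p ≤ #t :=
  le_trans ((Nat.le_div_iff_mul_le (card_pos.2 ⟨t, ht⟩)).2 (by rwa [mul_comm]))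
    (hP.average_le_card_part ht)

theorem IsEquipartition.card_part_le {q : ℕ} (hP : P.IsEquipartition) (ht : t ∈ P.parts)
    (hq : #s ≤ #P.parts * q) : #t ≤ q := by
  have hpos : 0 < #P.parts := card_pos.2 ⟨t, ht⟩
  rcases hP.card_parts_eq_average ht with h | h
  · exact h ▸ Nat.div_le_of_le_mul hq
  · -- a block of size `⌊|s| / k⌋ + 1` forces `k ∤ |s|`, so `|s| < k * q`
    have hmod : 0 < #s % #P.parts := by
      rw [← hP.card_large_parts_eq_mod]
      exact card_pos.2 ⟨t, mem_filter.2 ⟨ht, h⟩⟩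
    rcases hq.lt_or_eq with hlt | heq
    · exact h ▸ (Nat.div_lt_iff_lt_mul hpos).2 (by rwa [mul_comm])
    · rw [heq, Nat.mul_mod_right] at hmod
      exact absurd hmod (lt_irrefl 0)

end Finpartition

theorem Finset.exists_fin_partition_of_mul_le_card_le_mul {X : Finset α} {p q h : ℕ} (hp : 0 < p)
    (hh : 0 < h) (hlo : h * p ≤ #X) (hhi : #X ≤ h * q) :
    ∃ P : Fin h → Finset α, Pairwise (Disjoint on P) ∧ univ.biUnion P = X ∧
      ∀ i, p ≤ #(P i) ∧ #(P i) ≤ q := by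
  obtain ⟨E, hE, hcard⟩ := Finpartition.exists_equipartition_card_eq X hh.ne'
    (le_trans (Nat.le_mul_of_pos_right h hp) hlo)
  obtain ⟨P, hdisj, hunion, hmem⟩ := E.exists_fin_enum_parts hcard
  exact ⟨P, hdisj, hunion, fun i ↦
    ⟨hE.le_card_part (hmem i) (hcard ▸ hlo), hE.card_part_le (hmem i) (hcard ▸ hhi)⟩⟩

end Partition

/-- A finite set `X` can be partitioned into `h` subsets, each of size at
least `p` and at most `q`, if and only if `⌈|X|/q⌉ ≤ h ≤ ⌊|X|/p⌋`. -/
theorem partition_into_bounded_blocks_iff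
    {α : Type*} [DecidableEq α]
    (p q h : ℕ) (hp : 0 < p) (hpq : p ≤ q) (hh : 0 < h)
    (X : Finset α) :
    (∃ P : Fin h → Finset α,
      (∀ i j : Fin h, i ≠ j → Disjoint (P i) (P j)) ∧
      (Finset.univ.biUnion P = X) ∧
      (∀ i, p ≤ (P i).card ∧ (P i).card ≤ q)) ↔
    (⌈(X.card : ℚ) / (q : ℚ)⌉ ≤ (h : ℤ) ∧ (h : ℤ) ≤ ⌊(X.card : ℚ) / (p : ℚ)⌋) := by
  rw [Int.ceil_natCast_div_le_natCast_iff (hp.trans_le hpq),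
    Int.natCast_le_floor_natCast_div_iff hp, and_comm]
  constructor
  · rintro ⟨P, hdisj, rfl, hcard⟩
    simpa using card_mul_le_card_biUnion_le_card_mul (fun i j ↦ hdisj i j) hcard
  · rintro ⟨hlo, hhi⟩
    obtain ⟨P, hdisj, hunion, hcard⟩ := exists_fin_partition_of_mul_le_card_le_mul hp hh hlo hhi
    exact ⟨P, fun i j ↦ @hdisj i j, hunion, hcard⟩
end

section
/- Let J = {J_1,…,J_s} be the set of initial clusters of A and let I = {I_1,…,I_k} be a k-clustering of A. Then there exists a k-clustering I' = {I'_1,…,I'_k} of A such that (i) |I'_i| = |I_i| for all i ∈ {1,…,k}, (ii) cost(I'_1,…,I'_k) ≤ cost(I_1,…,I_k), and (iii) the bipartite intersection graph G(I',J) — whose vertex set is the disjoint union of {I'_1,…,I'_k} and {J_1,…,J_s}, with I'_i adjacent to J_p if and only if I'_i ∩ J_p ≠ ∅ — is acyclic (a forest). -/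
/-- The cost of a `k`-clustering: the minimum over all choices of medians
`c_1, ..., c_k ∈ α^m` of `∑ i, ∑ j ∈ I i, d_H (c i) (a j)`. -/
noncomputable def clusterCost {α : Type*} [Fintype α] [DecidableEq α] {m n k : ℕ}
    (a : Fin n → Fin m → α) (I : Fin k → Finset (Fin n)) : ℕ :=
  sInf {B : ℕ | ∃ c : Fin k → Fin m → α, ∑ i, ∑ j ∈ I i, hammingDist (c i) (a j) = B}

/-!
Encode a clustering by its label map `f : Fin n → Fin k`, the clusters being the fibers. A cycle
`i₀ p₀ i₁ p₁ …` in the intersection graph provides columns `x t ∈ I_{i_{t+1}} ∩ J_{p_t}` and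
`y t ∈ I_{i_t} ∩ J_{p_t}`, with `x t` and `y t` equal. Giving every `x t` the label of `y t`, or
every `y t` the label of `x t`, preserves the cluster sizes, and any quantity of the form
`∑ z, w z (f z)` in which `w (x t) = w (y t)` has, at `f`, the average of its values at the two
relabelings. This applies to the cost for fixed medians and to the counts `#(I_i ∩ J_p)`. So the
two relabelings cost at most `2 * cost f` together, while by the parallelogram law they strictly
increase the sum of the squares of the counts on average. Hence a clustering of minimal cost
that maximizes this sum among those of minimal cost has an acyclic intersection graph.
-/

open Finset Function

namespace Clustering

variable {X ι K P : Type*}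

def fiber [Fintype X] [DecidableEq K] (f : X → K) (i : K) : Finset X := univ.filter (f · = i)

@[simp]
lemma mem_fiber [Fintype X] [DecidableEq K] {f : X → K} {i : K} {z : X} :
    z ∈ fiber f i ↔ f z = i := by
  simp [fiber]

noncomputable def relabel (f : X → K) (x y : ι → X) : X → K := extend x (f ∘ y) f

lemma relabel_apply_self {f : X → K} {x : ι → X} (hx : Injective x) (y : ι → X) (t : ι) :
    relabel f x y (x t) = f (y t) :=
  hx.extend_apply _ _ t

lemma relabel_apply_of_notMem {f : X → K} {x : ι → X} (y : ι → X) {z : X}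
    (hz : z ∉ Set.range x) : relabel f x y z = f z :=
  extend_apply' _ _ _ hz

section Sums

variable [Fintype X] [Fintype ι] {M : Type*}

lemma sum_extend_add_sum [AddCommMonoid M] (w : X → K → M) (f : X → K) {x : ι → X}
    (hx : Injective x) (g : ι → K) :
    ∑ z, w z (extend x g f z) + ∑ t, w (x t) (f (x t)) =
      ∑ z, w z (f z) + ∑ t, w (x t) (g t) := by
  classical
  set s := univ.map ⟨x, hx⟩
  have split (h : X → K) : ∑ z, w z (h z) = ∑ t, w (x t) (h (x t)) + ∑ z ∈ sᶜ, w z (h z) := by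
    rw [← sum_add_sum_compl s, sum_map]
    rfl
  have off : ∀ z ∈ sᶜ, w z (extend x g f z) = w z (f z) := fun z hz => by
    rw [extend_apply' _ _ _ (by simpa [s] using hz)]
  rw [split (extend x g f), split f, sum_congr rfl off]
  simp only [hx.extend_apply]
  abel

lemma sum_relabel_add_sum_relabel [AddCancelCommMonoid M] (w : X → K → M) (f : X → K)
    {x y : ι → X} (hx : Injective x) (hy : Injective y) (hw : ∀ t, w (x t) = w (y t)) :
    ∑ z, w z (relabel f x y z) + ∑ z, w z (relabel f y x z) = 2 • ∑ z, w z (f z) := by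
  have h₁ := sum_extend_add_sum w f hx (f ∘ y)
  have h₂ := sum_extend_add_sum w f hy (f ∘ x)
  simp only [hw, comp_apply] at h₁ h₂
  apply add_right_cancel (b := ∑ t, w (y t) (f (x t)) + ∑ t, w (y t) (f (y t)))
  unfold relabel
  calc _ = (∑ z, w z (extend x (f ∘ y) f z) + ∑ t, w (y t) (f (x t))) +
        (∑ z, w z (extend y (f ∘ x) f z) + ∑ t, w (y t) (f (y t))) := by abel
    _ = _ := by rw [h₁, h₂]; abel

variable [DecidableEq K]

lemma card_fiber_eq_sum (f : X → K) (i : K) : #(fiber f i) = ∑ z, if f z = i then 1 else 0 := by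
  rw [← card_filter]
  rfl

lemma card_fiber_inter_eq_sum [DecidableEq X] (f : X → K) (i : K) (S : Finset X) :
    #(fiber f i ∩ S) = ∑ z, if f z = i ∧ z ∈ S then 1 else 0 := by
  rw [← card_filter]
  congr 1
  ext z
  simp

lemma card_fiber_inter_relabel_add [DecidableEq X] (f : X → K) {x y : ι → X} (hx : Injective x)
    (hy : Injective y) {S : Finset X} (hS : ∀ t, x t ∈ S ↔ y t ∈ S) (i : K) :
    #(fiber (relabel f x y) i ∩ S) + #(fiber (relabel f y x) i ∩ S) = 2 * #(fiber f i ∩ S) := by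
  simp only [card_fiber_inter_eq_sum]
  exact sum_relabel_add_sum_relabel (fun z j => if j = i ∧ z ∈ S then 1 else 0) f hx hy
    fun t => by simp only [hS]

lemma card_fiber_relabel (f : X → K) {x : ι → X} (hx : Injective x) {y : ι → X}
    (ρ : Equiv.Perm ι) (hρ : ∀ t, f (x t) = f (y (ρ t))) (i : K) :
    #(fiber (relabel f x y) i) = #(fiber f i) := by
  have h := sum_extend_add_sum (fun _ j => if j = i then 1 else 0) f hx (f ∘ y)
  simp only [hρ, comp_apply, Equiv.sum_comp ρ (fun t => if f (y t) = i then 1 else 0)] at h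
  rw [card_fiber_eq_sum, card_fiber_eq_sum]
  exact add_right_cancel h

lemma card_fiber_inter_lt_relabel [DecidableEq X] (f : X → K) {x : ι → X} (hx : Injective x)
    (y : ι → X) {S : Finset X} {t₀ : ι} (hS : ∀ t, x t ∈ S ↔ t = t₀) (hne : f (x t₀) ≠ f (y t₀)) :
    #(fiber f (f (y t₀)) ∩ S) < #(fiber (relabel f x y) (f (y t₀)) ∩ S) := by
  apply card_lt_card
  rw [ssubset_iff_of_subset]
  · refine ⟨x t₀, ?_, ?_⟩ <;> simp [relabel_apply_self hx, (hS t₀).2 rfl, hne]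
  · intro z hz
    simp only [mem_inter, mem_fiber] at hz ⊢
    refine ⟨?_, hz.2⟩
    by_cases hzx : z ∈ Set.range x
    · obtain ⟨t, rfl⟩ := hzx
      obtain rfl := (hS t).1 hz.2
      exact absurd hz.1 hne
    · rw [relabel_apply_of_notMem y hzx, hz.1]

end Sums

lemma two_mul_sum_sq_lt {β : Type*} {s : Finset β} {u v w : β → ℕ}
    (h : ∀ b ∈ s, u b + v b = 2 * w b) (hne : ∃ b ∈ s, u b ≠ w b) :
    2 * ∑ b ∈ s, w b ^ 2 < ∑ b ∈ s, u b ^ 2 + ∑ b ∈ s, v b ^ 2 := by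
  rw [mul_sum, ← sum_add_distrib]
  obtain ⟨b, hb, hub⟩ := hne
  refine sum_lt_sum (fun b hb => ?_) ⟨b, hb, ?_⟩
  · have := h b hb
    nlinarith [sq_nonneg ((u b : ℤ) - w b)]
  · have := h b hb
    have : (u b : ℤ) ≠ w b := by exact_mod_cast hub
    have := sq_pos_of_ne_zero (sub_ne_zero.mpr this)
    nlinarith

lemma sInf_range_add_sInf_range_le {γ : Type*} (F F₁ F₂ : γ → ℕ)
    (h : ∀ c, F₁ c + F₂ c = 2 * F c) :
    sInf (Set.range F₁) + sInf (Set.range F₂) ≤ 2 * sInf (Set.range F) := by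
  rcases isEmpty_or_nonempty γ with hγ | hγ
  · simp [Set.range_eq_empty]
  obtain ⟨c, hc⟩ := Nat.sInf_mem (Set.range_nonempty F)
  calc sInf (Set.range F₁) + sInf (Set.range F₂) ≤ F₁ c + F₂ c :=
        add_le_add (Nat.sInf_le ⟨c, rfl⟩) (Nat.sInf_le ⟨c, rfl⟩)
    _ = 2 * sInf (Set.range F) := by rw [h, hc]

lemma exists_mem_le_of_forall_exchange {β : Type*} {S : Finset β} {g₀ : β} (hg₀ : g₀ ∈ S)
    (F Q : β → ℕ) (P : β → Prop)
    (h : ∀ g ∈ S, ¬ P g → ∃ g₁ ∈ S, ∃ g₂ ∈ S, F g₁ + F g₂ ≤ 2 * F g ∧ 2 * Q g < Q g₁ + Q g₂) :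
    ∃ g ∈ S, F g ≤ F g₀ ∧ P g := by
  classical
  obtain ⟨g₁, hg₁, hmin⟩ := exists_min_image S F ⟨g₀, hg₀⟩
  obtain ⟨g, hg, hmax⟩ := exists_max_image (S.filter (F · = F g₁)) Q ⟨g₁, by simp [hg₁]⟩
  obtain ⟨hgS, hgF⟩ := mem_filter.1 hg
  refine ⟨g, hgS, hgF ▸ hmin g₀ hg₀, by_contra fun hP => ?_⟩
  obtain ⟨h₁, hh₁, h₂, hh₂, hF, hQ⟩ := h g hgS hP
  have := hmin h₁ hh₁
  have := hmin h₂ hh₂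
  have := hmax h₁ (mem_filter.2 ⟨hh₁, by omega⟩)
  have := hmax h₂ (mem_filter.2 ⟨hh₂, by omega⟩)
  omega

section Cost

variable {α : Type*} [Fintype α] [DecidableEq α] {m n k : ℕ}

def medianCost (a : Fin n → Fin m → α) (f : Fin n → Fin k) (c : Fin k → Fin m → α) : ℕ :=
  ∑ z, hammingDist (c (f z)) (a z)

lemma clusterCost_fiber (a : Fin n → Fin m → α) (f : Fin n → Fin k) :
    clusterCost a (fiber f) = sInf (Set.range (medianCost a f)) := by
  unfold clusterCost medianCost
  congr 1
  ext B
  refine exists_congr fun c => Eq.congr_left ?_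
  dsimp only
  rw [← sum_fiberwise univ f]
  refine sum_congr rfl fun i _ => sum_congr ?_ fun z hz => ?_
  · ext z; simp
  · rw [(mem_filter.1 hz).2]

lemma clusterCost_relabel_add_le (a : Fin n → Fin m → α) (f : Fin n → Fin k) {ι : Type*}
    [Fintype ι] {x y : ι → Fin n} (hx : Injective x) (hy : Injective y)
    (ha : ∀ t, a (x t) = a (y t)) :
    clusterCost a (fiber (relabel f x y)) + clusterCost a (fiber (relabel f y x)) ≤
      2 * clusterCost a (fiber f) := by
  simp only [clusterCost_fiber]
  refine sInf_range_add_sInf_range_le _ _ _ fun c => ?_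
  simpa only [medianCost, smul_eq_mul] using
    sum_relabel_add_sum_relabel (fun z j => hammingDist (c j) (a z)) f hx hy
      fun t => by simp only [ha]

end Cost

section Cycle

def bipartiteGraph (R : K → P → Prop) : SimpleGraph (K ⊕ P) :=
  SimpleGraph.fromRel fun u v => ∃ i p, u = .inl i ∧ v = .inr p ∧ R i p

lemma bipartiteGraph_adj_inr {R : K → P → Prop} {p : P} {u : K ⊕ P} :
    (bipartiteGraph R).Adj (.inr p) u ↔ ∃ i, u = .inl i ∧ R i p := by
  cases u <;> simp [bipartiteGraph, SimpleGraph.fromRel_adj]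

lemma isRight_eq_not_of_bipartiteGraph_adj {R : K → P → Prop} {u v : K ⊕ P}
    (h : (bipartiteGraph R).Adj u v) : v.isRight = !u.isRight := by
  cases u <;> cases v <;> simp_all [bipartiteGraph, SimpleGraph.fromRel_adj]

open Fin.CommRing in
lemma exists_alternating_cycle {R : K → P → Prop} (h : ¬ (bipartiteGraph R).IsAcyclic) :
    ∃ (ι : Type) (_ : Fintype ι) (_ : Nonempty ι) (p : ι → P) (i : ι → K) (ρ : Equiv.Perm ι),
      Injective p ∧ ∀ t, i t ≠ i (ρ t) ∧ R (i t) (p t) ∧ R (i (ρ t)) (p t) := by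
  classical
  obtain ⟨n, hn, ⟨φ⟩⟩ : ∃ n ≥ 3, (SimpleGraph.cycleGraph n).IsContained (bipartiteGraph R) := by
    simpa [SimpleGraph.isAcyclic_iff_free_cycleGraph] using h
  obtain ⟨r, rfl⟩ : ∃ r, n = r + 3 := ⟨n - 3, by omega⟩
  have adj (t : Fin (r + 3)) : (bipartiteGraph R).Adj (φ t) (φ (t + 1)) :=
    φ.toHom.map_adj (SimpleGraph.cycleGraph_adj.2 (Or.inr (by simp)))
  have side (t : Fin (r + 3)) : (φ (t + 1)).isRight = !(φ t).isRight :=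
    isRight_eq_not_of_bipartiteGraph_adj (adj t)
  have side₂ (t : Fin (r + 3)) : (φ (t + 2)).isRight = (φ t).isRight := by
    rw [← one_add_one_eq_two, ← add_assoc, side, side, Bool.not_not]
  -- index the cycle by the positions of its `P`-vertices; `i t` is the preceding `K`-vertex
  let ι := {t : Fin (r + 3) // (φ t).isRight}
  choose p hp using fun t : ι => Sum.isRight_iff.1 t.2
  have prev (t : ι) : ∃ i, φ (t - 1) = .inl i ∧ R i (p t) := by
    have := (adj (t - 1)).symm
    rwa [sub_add_cancel, hp, bipartiteGraph_adj_inr] at this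
  choose i hi using prev
  let ρ : Equiv.Perm ι := (Equiv.addRight 2).subtypeEquiv fun t => by
    simp [side₂]
  have hnext (t : ι) : φ (t + 1) = .inl (i (ρ t)) := by
    have e : ((ρ t : ι) : Fin (r + 3)) - 1 = t + 1 := by
      show (t : Fin (r + 3)) + 2 - 1 = t + 1
      ring
    rw [← e, (hi (ρ t)).1]
  have φinj : Injective φ := φ.toEmbedding.injective
  refine ⟨ι, inferInstance, ?_, p, i, ρ, fun t u htu => Subtype.ext (φinj ?_),
    fun t => ⟨fun hρ => ?_, (hi t).2, ?_⟩⟩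
  · by_cases h0 : (φ 0).isRight
    · exact ⟨⟨0, h0⟩⟩
    · exact ⟨⟨1, by simpa [h0] using side 0⟩⟩
  · rw [hp, hp, htu]
  · have h2 : (t : Fin (r + 3)) - 1 = t + 1 := φinj (by rw [(hi t).1, hnext, hρ])
    have := congrArg Fin.val (show (2 : Fin (r + 3)) = 0 by linear_combination -h2)
    rw [Fin.val_two, Fin.val_zero] at this
    omega
  · have := adj t
    rw [hp, hnext, bipartiteGraph_adj_inr] at this
    obtain ⟨j, hj, hR⟩ := this
    rwa [Sum.inl_injective hj]

end Cycle

def overlapEnergy [Fintype X] [DecidableEq X] [Fintype K] [DecidableEq K] [Fintype P]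
    (J : P → Finset X) (f : X → K) : ℕ :=
  ∑ q : K × P, #(fiber f q.1 ∩ J q.2) ^ 2

lemma exists_relabel_pair {α : Type*} [Fintype α] [DecidableEq α] {m n k s : ℕ}
    (a : Fin n → Fin m → α) {J : Fin s → Finset (Fin n)} (hJdisj : Pairwise (Disjoint on J))
    (hJa : ∀ p, ∀ z ∈ J p, ∀ z' ∈ J p, a z = a z') {f : Fin n → Fin k}
    (hf : ¬ (bipartiteGraph fun i p => (fiber f i ∩ J p).Nonempty).IsAcyclic) :
    ∃ f₁ f₂ : Fin n → Fin k,
      (∀ i, #(fiber f₁ i) = #(fiber f i)) ∧ (∀ i, #(fiber f₂ i) = #(fiber f i)) ∧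
      clusterCost a (fiber f₁) + clusterCost a (fiber f₂) ≤ 2 * clusterCost a (fiber f) ∧
      2 * overlapEnergy J f < overlapEnergy J f₁ + overlapEnergy J f₂ := by
  obtain ⟨ι, _, ⟨t₀⟩, p, i, ρ, hp, hcyc⟩ := exists_alternating_cycle hf
  -- `x t` and `y t` are equal columns in `J (p t)`, labelled `i (ρ t)` and `i t`
  choose x hx using fun t => (hcyc t).2.2
  choose y hy using fun t => (hcyc t).2.1
  simp only [mem_inter, mem_fiber] at hx hy
  have mem_J {z : ι → Fin n} (hz : ∀ t, z t ∈ J (p t)) (t : ι) (q : Fin s) :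
      z t ∈ J q ↔ q = p t :=
    ⟨fun hq => by_contra fun hne => disjoint_left.1 (hJdisj hne) hq (hz t), fun h => h ▸ hz t⟩
  have inj_of_mem {z : ι → Fin n} (hz : ∀ t, z t ∈ J (p t)) : Injective z := fun t u h =>
    hp ((mem_J hz u (p t)).1 (h ▸ hz t))
  have hxinj := inj_of_mem fun t => (hx t).2
  have hyinj := inj_of_mem fun t => (hy t).2
  refine ⟨relabel f x y, relabel f y x,
    card_fiber_relabel f hxinj ρ fun t => by rw [(hx t).1, (hy _).1],
    card_fiber_relabel f hyinj ρ.symm fun t => by rw [(hy t).1, (hx _).1, Equiv.apply_symm_apply],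
    clusterCost_relabel_add_le a f hxinj hyinj fun t => hJa _ _ (hx t).2 _ (hy t).2,
    two_mul_sum_sq_lt (fun q _ => card_fiber_inter_relabel_add f hxinj hyinj
      (fun t => by rw [mem_J (fun t => (hx t).2), mem_J (fun t => (hy t).2)]) q.1)
      ⟨(i t₀, p t₀), mem_univ _, ne_of_gt ?_⟩⟩
  have hS (t : ι) : x t ∈ J (p t₀) ↔ t = t₀ := by
    rw [mem_J (fun t => (hx t).2), hp.eq_iff, eq_comm]
  have hne : f (x t₀) ≠ f (y t₀) := by rw [(hx t₀).1, (hy t₀).1]; exact (hcyc t₀).1.symm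
  simpa only [(hy t₀).1] using card_fiber_inter_lt_relabel f hxinj y hS hne

end Clustering

open Clustering in
theorem exists_acyclic_clustering_general
    {α : Type*} [Fintype α] [DecidableEq α]
    (m n k s : ℕ)
    (a : Fin n → Fin m → α)
    -- the initial clusters J_1, ..., J_s of A
    (J : Fin s → Finset (Fin n))
    (hJclass : ∀ p, ∀ x ∈ J p, ∀ y : Fin n, (y ∈ J p ↔ a y = a x))
    (hJdisj : ∀ p q : Fin s, p ≠ q → Disjoint (J p) (J q))
    -- a k-clustering
    (I : Fin k → Finset (Fin n))
    (hdisj : ∀ i j : Fin k, i ≠ j → Disjoint (I i) (I j))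
    (hcover : ∀ x : Fin n, ∃ i, x ∈ I i) :
    ∃ I' : Fin k → Finset (Fin n),
      (∀ i j : Fin k, i ≠ j → Disjoint (I' i) (I' j)) ∧
      (∀ x : Fin n, ∃ i, x ∈ I' i) ∧
      (∀ i, (I' i).card = (I i).card) ∧
      clusterCost a I' ≤ clusterCost a I ∧
      (SimpleGraph.fromRel (fun (x y : Fin k ⊕ Fin s) =>
        ∃ i p, x = Sum.inl i ∧ y = Sum.inr p ∧ (I' i ∩ J p).Nonempty)).IsAcyclic := by
  choose f₀ hf₀ using hcover
  have hI : fiber f₀ = I := funext fun i => ext fun z =>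
    ⟨fun h => mem_fiber.1 h ▸ hf₀ z, fun hz => mem_fiber.2 <|
      by_contra fun hne => disjoint_left.1 (hdisj _ _ hne) (hf₀ z) hz⟩
  have hJa (p) : ∀ z ∈ J p, ∀ z' ∈ J p, a z = a z' := fun z hz z' hz' =>
    ((hJclass p z hz z').1 hz').symm
  obtain ⟨f, hf, hcost, hacyc⟩ := exists_mem_le_of_forall_exchange
    (S := univ.filter fun g => ∀ i, #(fiber g i) = #(I i)) (g₀ := f₀) (by simp [hI])
    (fun g => clusterCost a (fiber g)) (overlapEnergy J)
    (fun g => (bipartiteGraph fun i p => (fiber g i ∩ J p).Nonempty).IsAcyclic)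
    fun g hg hcyc => by
      obtain ⟨f₁, f₂, h₁, h₂, hcost, henergy⟩ := exists_relabel_pair a hJdisj hJa hcyc
      simp only [mem_filter, mem_univ, true_and] at hg ⊢
      exact ⟨f₁, fun i => (h₁ i).trans (hg i), f₂, fun i => (h₂ i).trans (hg i), hcost, henergy⟩
  refine ⟨fiber f, fun i j hij => disjoint_left.2 fun z hi hj => hij ?_,
    fun z => ⟨f z, mem_fiber.2 rfl⟩, (mem_filter.1 hf).2, hI ▸ hcost, hacyc⟩
  exact (mem_fiber.1 hi).symm.trans (mem_fiber.1 hj)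

/-- Every `k`-clustering can be replaced by one with the same cluster sizes,
no larger cost, and whose bipartite intersection graph with the initial clusters is a
forest. -/
theorem exists_acyclic_clustering
    {α : Type*} [Fintype α] [Nonempty α] [DecidableEq α]
    (m n k s : ℕ) (hm : 0 < m) (hn : 0 < n) (hk : 0 < k)
    (a : Fin n → Fin m → α)
    -- the initial clusters J_1, ..., J_s of A
    (J : Fin s → Finset (Fin n))
    (hJne : ∀ p, (J p).Nonempty)
    (hJclass : ∀ p, ∀ x ∈ J p, ∀ y : Fin n, (y ∈ J p ↔ a y = a x))
    (hJdisj : ∀ p q : Fin s, p ≠ q → Disjoint (J p) (J q))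
    (hJcover : ∀ x : Fin n, ∃ p, x ∈ J p)
    -- a k-clustering
    (I : Fin k → Finset (Fin n))
    (hdisj : ∀ i j : Fin k, i ≠ j → Disjoint (I i) (I j))
    (hcover : ∀ x : Fin n, ∃ i, x ∈ I i) :
    ∃ I' : Fin k → Finset (Fin n),
      (∀ i j : Fin k, i ≠ j → Disjoint (I' i) (I' j)) ∧
      (∀ x : Fin n, ∃ i, x ∈ I' i) ∧
      (∀ i, (I' i).card = (I i).card) ∧
      clusterCost a I' ≤ clusterCost a I ∧
      (SimpleGraph.fromRel (fun (x y : Fin k ⊕ Fin s) =>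
        ∃ i p, x = Sum.inl i ∧ y = Sum.inr p ∧ (I' i ∩ J p).Nonempty)).IsAcyclic :=
  exists_acyclic_clustering_general m n k s a J hJclass hJdisj I hdisj hcover
end

section
/- Let I ⊆ {1,…,n} be nonempty and let c ∈ Σ^m be an optimal median of I, i.e., c minimizes Σ_{h∈I} d_H(·, a_h) over Σ^m. Let s ∈ Σ^m and let j ∈ {1,…,m} be a coordinate with c j ≠ s j. Then at least half of the vectors of the cluster differ from s at coordinate j, i.e., 2·|{h ∈ I : a_h j ≠ s j}| ≥ |I|. -/
/-!
Moving the median `c` to `Function.update c j (s j)` changes its distance to each vector only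
through coordinate `j`, so optimality of `c` says that no more vectors of the cluster differ from
`c` at `j` than differ from `s` at `j`. As `c j ≠ s j`, every vector agreeing with `s` at `j`
differs from `c` there; so the vectors agreeing with `s` at `j` are at most as many as those
differing from it.
-/

open Finset

section
variable {ι : Type*} [Fintype ι] [DecidableEq ι] {β : ι → Type*} [∀ i, DecidableEq (β i)]

theorem hammingDist_update_add (x y : ∀ i, β i) (j : ι) (v : β j) :
    hammingDist (Function.update x j v) y + (if x j ≠ y j then 1 else 0) =
      hammingDist x y + (if v ≠ y j then 1 else 0) := by
  simp only [hammingDist, card_filter]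
  rw [← add_sum_erase _ _ (mem_univ j), ← add_sum_erase _ _ (mem_univ j), Function.update_self,
    sum_congr rfl fun i hi => by rw [Function.update_of_ne (ne_of_mem_erase hi)]]
  ac_rfl

theorem card_filter_ne_le_of_forall_sum_hammingDist_le {κ : Type*} (I : Finset κ)
    (a : κ → ∀ i, β i) (c : ∀ i, β i)
    (hc : ∀ b, ∑ h ∈ I, hammingDist c (a h) ≤ ∑ h ∈ I, hammingDist b (a h))
    (j : ι) (v : β j) :
    #{h ∈ I | a h j ≠ c j} ≤ #{h ∈ I | a h j ≠ v} := by
  have hsum := sum_congr rfl fun h (_ : h ∈ I) => hammingDist_update_add c (a h) j v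
  rw [sum_add_distrib, sum_add_distrib, ← card_filter, ← card_filter] at hsum
  simp only [ne_comm (a := a _ j)]
  have hle := hc (Function.update c j v)
  omega

end

theorem optimal_median_majority_coordinate_general
    {α : Type*} [DecidableEq α]
    (m n : ℕ)
    (a : Fin n → Fin m → α)
    (I : Finset (Fin n))
    (c : Fin m → α)
    (hopt : ∀ b : Fin m → α,
      ∑ h ∈ I, hammingDist c (a h) ≤ ∑ h ∈ I, hammingDist b (a h))
    (s : Fin m → α) (j : Fin m) (hj : c j ≠ s j) :
    I.card ≤ 2 * (I.filter fun h => a h j ≠ s j).card := by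
  have hagree : #{h ∈ I | a h j = s j} ≤ #{h ∈ I | a h j ≠ c j} :=
    card_le_card <| monotone_filter_right I fun h _ hs => hs ▸ hj.symm
  have hmedian := card_filter_ne_le_of_forall_sum_hammingDist_le I a c hopt j (s j)
  have hsplit := card_filter_add_card_filter_not (s := I) fun h => a h j ≠ s j
  simp only [not_not] at hsplit
  omega

/-- If `c` is an optimal median of a nonempty cluster `I` and `c` differs
from `s` at coordinate `j`, then at least half of the vectors of the cluster differ
from `s` at coordinate `j`. -/
theorem optimal_median_majority_coordinate
    {α : Type*} [Fintype α] [Nonempty α] [DecidableEq α]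
    (m n : ℕ) (hm : 0 < m) (hn : 0 < n)
    (a : Fin n → Fin m → α)
    (I : Finset (Fin n)) (hI : I.Nonempty)
    (c : Fin m → α)
    (hopt : ∀ b : Fin m → α,
      ∑ h ∈ I, hammingDist c (a h) ≤ ∑ h ∈ I, hammingDist b (a h))
    (s : Fin m → α) (j : Fin m) (hj : c j ≠ s j) :
    I.card ≤ 2 * (I.filter fun h => a h j ≠ s j).card :=
  optimal_median_majority_coordinate_general m n a I c hopt s j hj
end

section
/- Let {I_1,…,I_k} be a k-clustering of A and let c_1,…,c_k ∈ Σ^m be optimal medians, i.e., each c_i minimizes Σ_{j∈I_i} d_H(·, a_j) over Σ^m. Let S ⊆ {c_1,…,c_k} be the set of those medians that coincide with some column of A. Then there exists a k-clustering {I'_1,…,I'_k} of A such that (i) |I'_i| = |I_i| for all i ∈ {1,…,k}, (ii) Σ_{i=1}^k Σ_{j∈I'_i} d_H(c_i, a_j) ≤ Σ_{i=1}^k Σ_{j∈I_i} d_H(c_i, a_j), and (iii) for every s ∈ S, letting J = {j ∈ {1,…,n} : a_j = s} be the initial cluster of its column value, there exists i ∈ {1,…,k} such that either J ⊆ I'_i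 or I'_i ⊊ J. -/
/-!
Encode a clustering by the map sending each column to its cluster. Fix for every median value
`v` a home cluster `home v` with median `v`, and call a column misplaced if its value is a median
value but it does not lie in the home cluster of that value. If the initial cluster `J` of a
median value `v` neither lies inside the cluster `home v` nor contains it, there are columns
`j ∈ J` outside `home v` and `j' ∉ J` inside `home v`; swapping them keeps all cluster sizes,
strictly decreases the number of misplaced columns, and does not increase the cost: `j` now costs
nothing, and by the triangle inequality `j'` costs at most what `j` and `j'` cost before. So an
assignment with the fewest misplaced columns, among those with the same cluster sizes and no
larger cost, has every such `J` inside `home v` or containing it.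
-/

open Finset

section Assignment

variable {ι κ α : Type*} [Fintype ι] {m : ℕ}
  (c : κ → Fin m → α) (a : ι → Fin m → α)

def assignmentCost [DecidableEq α] (f : ι → κ) : ℕ :=
  ∑ x, hammingDist (c (f x)) (a x)

open Classical in
noncomputable def misplaced (home : (Fin m → α) → κ) (f : ι → κ) : Finset ι :=
  {x | a x ∈ Set.range c ∧ f x ≠ home (a x)}

variable {c a}

theorem card_fiber_comp_perm [DecidableEq κ] (f : ι → κ) (σ : Equiv.Perm ι) (i : κ) :
    #{x | f (σ x) = i} = #{x | f x = i} :=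
  card_equiv σ (by simp)

theorem assignmentCost_comp_swap_le [DecidableEq ι] [DecidableEq α] {f : ι → κ} {j j' : ι}
    (h : a j = c (f j')) :
    assignmentCost c a (f ∘ Equiv.swap j j') ≤ assignmentCost c a f := by
  rcases eq_or_ne j j' with rfl | hne
  · simp
  have hpair : hammingDist (c (f j')) (a j) + hammingDist (c (f j)) (a j')
      ≤ hammingDist (c (f j)) (a j) + hammingDist (c (f j')) (a j') := by
    rw [← h, hammingDist_self, zero_add]
    exact hammingDist_triangle (c (f j)) (a j) (a j')
  have hrest : ∑ x ∈ {j, j'}ᶜ, hammingDist (c (f (Equiv.swap j j' x))) (a x)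
      = ∑ x ∈ {j, j'}ᶜ, hammingDist (c (f x)) (a x) := by
    refine sum_congr rfl fun x hx => ?_
    simp only [mem_compl, mem_insert, mem_singleton, not_or] at hx
    rw [Equiv.swap_apply_of_ne_of_ne hx.1 hx.2]
  unfold assignmentCost
  rw [← sum_add_sum_compl {j, j'},
    ← sum_add_sum_compl {j, j'} fun x => hammingDist (c (f x)) (a x), sum_pair hne, sum_pair hne]
  simp only [Function.comp_apply, Equiv.swap_apply_left, Equiv.swap_apply_right, hrest]
  exact Nat.add_le_add_right hpair _

theorem misplaced_comp_swap_ssubset [DecidableEq ι] {home : (Fin m → α) → κ}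
    (hhome : ∀ v ∈ Set.range c, c (home v) = v) {f : ι → κ} {j j' : ι}
    (hj : a j ∈ Set.range c) (hfj : f j ≠ home (a j)) (hfj' : f j' = home (a j))
    (hne : a j' ≠ a j) :
    misplaced c a home (f ∘ Equiv.swap j j') ⊂ misplaced c a home f := by
  have hj_mem : j ∈ misplaced c a home f := by simp [misplaced, hj, hfj]
  refine (ssubset_iff_of_subset fun x hx => ?_).2 ⟨j, hj_mem, by simp [misplaced, hfj']⟩
  simp only [misplaced, mem_filter, mem_univ, true_and, Function.comp_apply] at hx ⊢
  obtain ⟨hx, hfx⟩ := hx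
  refine ⟨hx, ?_⟩
  rcases eq_or_ne x j with rfl | hxj
  · exact hfj
  rcases eq_or_ne x j' with rfl | hxj'
  · rw [hfj']
    exact fun h => hne (by rw [← hhome _ hx, ← h, hhome _ hj])
  · rwa [Equiv.swap_apply_of_ne_of_ne hxj hxj'] at hfx

theorem exists_assignment_fiber_subset_or_subset [DecidableEq ι] [DecidableEq κ] [DecidableEq α]
    {home : (Fin m → α) → κ} (hhome : ∀ v ∈ Set.range c, c (home v) = v) (f : ι → κ) :
    ∃ f' : ι → κ, (∀ i, #{x | f' x = i} = #{x | f x = i}) ∧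
      assignmentCost c a f' ≤ assignmentCost c a f ∧
      ∀ v ∈ Set.range c,
        ({x | a x = v} : Finset ι) ⊆ ({x | f' x = home v} : Finset ι) ∨
        ({x | f' x = home v} : Finset ι) ⊆ ({x | a x = v} : Finset ι) := by
  obtain ⟨f', ⟨hcard, hcost⟩, hmin⟩ := (measure fun g => #(misplaced c a home g)).wf.has_min
    {g | (∀ i, #{x | g x = i} = #{x | f x = i}) ∧ assignmentCost c a g ≤ assignmentCost c a f}
    ⟨f, fun _ => rfl, le_rfl⟩
  refine ⟨f', hcard, hcost, fun v hv => ?_⟩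
  by_contra! ⟨hJ, hI⟩
  obtain ⟨j, hj, hfj⟩ := not_subset.1 hJ
  obtain ⟨j', hfj', hj'⟩ := not_subset.1 hI
  simp only [mem_filter, mem_univ, true_and] at hj hfj hfj' hj'
  subst hj
  have hcost' : assignmentCost c a (f' ∘ Equiv.swap j j') ≤ assignmentCost c a f :=
    (assignmentCost_comp_swap_le (by rw [hfj', hhome _ hv])).trans hcost
  exact hmin (f' ∘ Equiv.swap j j')
    ⟨fun i => (card_fiber_comp_perm f' _ i).trans (hcard i), hcost'⟩
    (card_lt_card (misplaced_comp_swap_ssubset hhome hv hfj hfj' hj'))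

end Assignment

section Clustering

variable {ι κ : Type*} [Fintype ι] [DecidableEq κ]

def IsClustering (I : κ → Finset ι) : Prop :=
  (∀ i j, i ≠ j → Disjoint (I i) (I j)) ∧ ∀ x, ∃ i, x ∈ I i

theorem isClustering_fibers (f : ι → κ) : IsClustering fun i => ({x | f x = i} : Finset ι) :=
  ⟨fun i j hij => disjoint_filter.2 fun _ _ hi hj => hij (hi.symm.trans hj),
    fun x => ⟨f x, by simp⟩⟩

theorem IsClustering.exists_eq_fibers {I : κ → Finset ι} (hI : IsClustering I) :
    ∃ f : ι → κ, I = fun i => ({x | f x = i} : Finset ι) := by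
  choose f hf using hI.2
  refine ⟨f, funext fun i => ext fun x => ?_⟩
  simp only [mem_filter, mem_univ, true_and]
  refine ⟨fun hx => ?_, fun hfx => hfx ▸ hf x⟩
  by_contra hne
  exact disjoint_left.1 (hI.1 _ _ hne) (hf x) hx

theorem sum_sum_fiber_eq_sum {M : Type*} [AddCommMonoid M] [Fintype κ] (f : ι → κ)
    (g : κ → ι → M) : ∑ i, ∑ x ∈ {x | f x = i}, g i x = ∑ x, g (f x) x := by
  rw [← sum_fiberwise univ f fun x => g (f x) x]
  exact sum_congr rfl fun i _ => sum_congr rfl fun x hx => by rw [(mem_filter.1 hx).2]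

end Clustering

theorem exchange_lemma_general
    {α : Type*} [DecidableEq α]
    (m n k : ℕ) (hk : 0 < k)
    (a : Fin n → Fin m → α)
    (I : Fin k → Finset (Fin n))
    (hdisj : ∀ i j : Fin k, i ≠ j → Disjoint (I i) (I j))
    (hcover : ∀ x : Fin n, ∃ i, x ∈ I i)
    (c : Fin k → Fin m → α) :
    ∃ I' : Fin k → Finset (Fin n),
      (∀ i j : Fin k, i ≠ j → Disjoint (I' i) (I' j)) ∧
      (∀ x : Fin n, ∃ i, x ∈ I' i) ∧
      (∀ i, (I' i).card = (I i).card) ∧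
      (∑ i, ∑ j ∈ I' i, hammingDist (c i) (a j)
        ≤ ∑ i, ∑ j ∈ I i, hammingDist (c i) (a j)) ∧
      (∀ i₀ : Fin k, (∃ j : Fin n, a j = c i₀) →
        ∃ i : Fin k,
          ((Finset.univ.filter fun j : Fin n => a j = c i₀) ⊆ I' i) ∨
          (I' i ⊂ Finset.univ.filter fun j : Fin n => a j = c i₀)) := by
  obtain ⟨f, rfl⟩ := IsClustering.exists_eq_fibers ⟨hdisj, hcover⟩
  have : Nonempty (Fin k) := ⟨⟨0, hk⟩⟩
  obtain ⟨f', hcard, hcost, hsplit⟩ :=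
    exists_assignment_fiber_subset_or_subset (a := a) (fun v hv => Function.invFun_eq hv) f
  refine ⟨fun i => {x | f' x = i}, (isClustering_fibers f').1, (isClustering_fibers f').2,
    hcard, ?_, fun i₀ _ => ⟨Function.invFun c (c i₀), ?_⟩⟩
  · rw [sum_sum_fiber_eq_sum f' fun i x => hammingDist (c i) (a x),
      sum_sum_fiber_eq_sum f fun i x => hammingDist (c i) (a x)]
    exact hcost
  rcases hsplit (c i₀) ⟨i₀, rfl⟩ with hJ | hI
  · exact .inl hJ
  · exact hI.ssubset_or_eq.elim .inr fun h => .inl h.ge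

/-- exchange lemma: given a `k`-clustering with optimal medians, there is a
`k`-clustering with the same cluster sizes and no larger cost with respect to the same
medians, such that for every median coinciding with a column of `A`, the corresponding
initial cluster is either contained in a single cluster or a cluster is strictly
contained in it. -/
theorem exchange_lemma
    {α : Type*} [Fintype α] [Nonempty α] [DecidableEq α]
    (m n k : ℕ) (hm : 0 < m) (hn : 0 < n) (hk : 0 < k)
    (a : Fin n → Fin m → α)
    (I : Fin k → Finset (Fin n))
    (hdisj : ∀ i j : Fin k, i ≠ j → Disjoint (I i) (I j))
    (hcover : ∀ x : Fin n, ∃ i, x ∈ I i)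
    (c : Fin k → Fin m → α)
    (hopt : ∀ i : Fin k, ∀ b : Fin m → α,
      ∑ j ∈ I i, hammingDist (c i) (a j) ≤ ∑ j ∈ I i, hammingDist b (a j)) :
    ∃ I' : Fin k → Finset (Fin n),
      (∀ i j : Fin k, i ≠ j → Disjoint (I' i) (I' j)) ∧
      (∀ x : Fin n, ∃ i, x ∈ I' i) ∧
      (∀ i, (I' i).card = (I i).card) ∧
      (∑ i, ∑ j ∈ I' i, hammingDist (c i) (a j)
        ≤ ∑ i, ∑ j ∈ I i, hammingDist (c i) (a j)) ∧
      (∀ i₀ : Fin k, (∃ j : Fin n, a j = c i₀) →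
        ∃ i : Fin k,
          ((Finset.univ.filter fun j : Fin n => a j = c i₀) ⊆ I' i) ∨
          (I' i ⊂ Finset.univ.filter fun j : Fin n => a j = c i₀)) :=
  exchange_lemma_general m n k hk a I hdisj hcover c
end

section
/- Let G be a finite simple graph that is a forest (contains no cycles), and suppose its vertex set is partitioned into two sets U and W such that every edge of G has one endpoint in U and one endpoint in W. If U is nonempty and every vertex of U has degree at least 2 in G, then the number of vertices of W that have at least one neighbor in U is at least |U| + 1. -/
open SimpleGraph Finset

/-!
Restricting to the vertices `N` of `W` that have a neighbour in `U`, the graph is bipartite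
between `U` and `N`, so its edges are counted exactly once by the degrees on `U`: there are at
least `2 |U|` of them. A forest on the nonempty vertex set `U ∪ N` has fewer than `|U| + |N|`
edges (it extends to a spanning tree on `U ∪ N`), hence `2 |U| < |U| + |N|`.
-/

namespace SimpleGraph

variable {V : Type*} {G : SimpleGraph V}

theorem ncard_neighborSet_eq_degree (v : V) [Fintype (G.neighborSet v)] :
    (G.neighborSet v).ncard = G.degree v := by
  rw [← card_neighborFinset_eq_degree, ← Set.ncard_coe_finset, coe_neighborFinset]

theorem IsAcyclic.card_edgeFinset_lt_card_of_support_subset [Fintype G.edgeSet]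
    (hG : G.IsAcyclic) {s : Finset V} (hs : s.Nonempty) (hsupp : G.support ⊆ s) :
    #G.edgeFinset < #s := by
  classical
  have : Nonempty s := hs.to_subtype
  obtain ⟨T, hle, -, hT⟩ :=
    connected_top.exists_isTree_le_of_le_of_isAcyclic le_top (hG.induce (s : Set V))
  have hedges : G.edgeFinset = (G.induce (s : Set V)).edgeFinset.map
      (Function.Embedding.subtype _).sym2Map := by
    rw [← coe_inj, coe_edgeFinset, coe_map, coe_edgeFinset, ← edgeSet_map]
    exact congrArg edgeSet ((spanningCoe_induce_eq_self G _).mpr hsupp).symm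
  calc #G.edgeFinset = #(G.induce (s : Set V)).edgeFinset := by rw [hedges, card_map]
    _ ≤ #T.edgeFinset := card_le_card (edgeFinset_mono hle)
    _ < Fintype.card s := hT.card_edgeFinset ▸ Nat.lt_succ_self _
    _ = #s := Fintype.card_coe s

end SimpleGraph

theorem forest_bipartite_neighbors_bound_general
    {V : Type*} [Fintype V] (G : SimpleGraph V) (hG : G.IsAcyclic)
    (U W : Finset V)
    (hUW : Disjoint U W)
    (hbip : ∀ u v : V, G.Adj u v → (u ∈ U ∧ v ∈ W) ∨ (u ∈ W ∧ v ∈ U))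
    (hUne : U.Nonempty)
    (hdeg : ∀ u ∈ U, 2 ≤ (G.neighborSet u).ncard) :
    U.card + 1 ≤ {w : V | w ∈ W ∧ ∃ u ∈ U, G.Adj w u}.ncard := by
  classical
  set N := W.filter fun w => ∃ u ∈ U, G.Adj w u
  have hN : {w : V | w ∈ W ∧ ∃ u ∈ U, G.Adj w u}.ncard = #N := by
    rw [← Set.ncard_coe_finset, coe_filter]
  have hB : G.IsBipartiteWith U N := by
    refine ⟨disjoint_coe.mpr (hUW.mono_right (filter_subset _ _)), fun u v huv => ?_⟩
    rcases hbip u v huv with ⟨hu, hv⟩ | ⟨hu, hv⟩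
    · exact .inl ⟨hu, mem_filter.mpr ⟨hv, u, hu, huv.symm⟩⟩
    · exact .inr ⟨mem_filter.mpr ⟨hu, v, hv, huv⟩, hv⟩
  have hlower : 2 * #U ≤ #G.edgeFinset := by
    rw [← isBipartiteWith_sum_degrees_eq_card_edges hB, mul_comm, ← smul_eq_mul, ← sum_const]
    exact sum_le_sum fun u hu => (hdeg u hu).trans_eq (ncard_neighborSet_eq_degree u)
  have hupper : #G.edgeFinset < #(U ∪ N) :=
    hG.card_edgeFinset_lt_card_of_support_subset (hUne.mono subset_union_left)
      (by simpa using isBipartiteWith_support_subset hB)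
  rw [card_union_of_disjoint (disjoint_coe.mp hB.disjoint)] at hupper
  rw [hN]
  omega

/-- In a bipartite forest with sides `U` and `W`, if `U` is nonempty and
every vertex of `U` has degree at least 2, then at least `|U| + 1` vertices of `W` have a
neighbor in `U`. -/
theorem forest_bipartite_neighbors_bound
    {V : Type*} [Fintype V] (G : SimpleGraph V) (hG : G.IsAcyclic)
    (U W : Finset V)
    (hUW : Disjoint U W)
    (hcover : ∀ v : V, v ∈ U ∨ v ∈ W)
    (hbip : ∀ u v : V, G.Adj u v → (u ∈ U ∧ v ∈ W) ∨ (u ∈ W ∧ v ∈ U))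
    (hUne : U.Nonempty)
    (hdeg : ∀ u ∈ U, 2 ≤ (G.neighborSet u).ncard) :
    U.card + 1 ≤ {w : V | w ∈ W ∧ ∃ u ∈ U, G.Adj w u}.ncard :=
  forest_bipartite_neighbors_bound_general G hG U W hUW hbip hUne hdeg
end

section
/- Let c_1,…,c_k ∈ Σ^m be given vectors, let p ≤ q be positive integers, and assume pk ≤ n ≤ qk. Define the bipartite graph G as follows. One side consists of vertices u_1,…,u_n (one per column of A) together with 'filler' vertices u'_1,…,u'_{qk−n}; the other side consists, for each i ∈ {1,…,k}, of q vertices v^i_1,…,v^i_q, where W_i = {v^i_1,…,v^i_p} and W'_i = {v^i_{p+1},…,v^i_q}. Each u_h (1 ≤ h ≤ n) is adjacent to every vertex v^i_j (1 ≤ i ≤ k, 1 ≤ j ≤ q), the edge u_h v^i_j having weight d_H(c_i, a_h); each filler u'_h is adjacent exactly to all vertices of W'_1 ∪ … ∪ W'_k, these edges having weight 0; there are no other edges. Then G has a perfect matching whose total edge weight is at most B if and only if there exists a k-clustering {I_1,…,I_k} of A with p ≤ |I_i| ≤ q for all i ∈ {1,…,k} and Σ_{i=1}^k Σ_{j∈I_i}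 d_H(c_i, a_j) ≤ B. -/
namespace CapacitatedClusteringMatching

/-- Vertices of the auxiliary bipartite graph: on the left, the `n` column vertices
`u_1, ..., u_n` together with `fn = qk - n` filler vertices `u'_1, ..., u'_fn`; on the
right, for each `i ∈ {1,…,k}` the `q` vertices `v^i_1, ..., v^i_q` (those with index
`< p` form `W_i`, the remaining ones form `W'_i`). -/
abbrev Vt (n fn k q : ℕ) := (Fin n ⊕ Fin fn) ⊕ (Fin k × Fin q)

/-- Base (one-sided) adjacency relation: every column vertex `u_h` is related to every
right vertex `v^i_j`; every filler is related exactly to the vertices of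
`W'_1 ∪ ⋯ ∪ W'_k`, i.e. those `v^i_j` with `p ≤ j`. -/
def rel (n fn k q p : ℕ) : Vt n fn k q → Vt n fn k q → Prop
  | Sum.inl (Sum.inl _), Sum.inr _ => True
  | Sum.inl (Sum.inr _), Sum.inr (_, j) => p ≤ (j : ℕ)
  | _, _ => False

/-- The auxiliary bipartite graph `G`. -/
def G (n fn k q p : ℕ) : SimpleGraph (Vt n fn k q) :=
  SimpleGraph.fromRel (rel n fn k q p)

/-- Edge weights: the edge `u_h v^i_j` has weight `d_H(c_i, a_h)`; all edges incident to
fillers have weight `0`. -/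
def pw {α : Type*} [DecidableEq α] {m n k : ℕ} (fn q : ℕ)
    (a : Fin n → Fin m → α) (c : Fin k → Fin m → α) :
    Vt n fn k q → Vt n fn k q → ℕ
  | Sum.inl (Sum.inl h), Sum.inr (i, _) => hammingDist (c i) (a h)
  | Sum.inr (i, _), Sum.inl (Sum.inl h) => hammingDist (c i) (a h)
  | _, _ => 0

lemma pw_symm {α : Type*} [DecidableEq α] {m n k : ℕ} (fn q : ℕ)
    (a : Fin n → Fin m → α) (c : Fin k → Fin m → α) :
    ∀ x y : Vt n fn k q, pw fn q a c x y = pw fn q a c y x := by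
  rintro (⟨h, h⟩ | ⟨i, j⟩) (⟨h', h'⟩ | ⟨i', j'⟩) <;> rfl

/-- The weight of an edge of the auxiliary graph. -/
def edgeWeight {α : Type*} [DecidableEq α] {m n k : ℕ} (fn q : ℕ)
    (a : Fin n → Fin m → α) (c : Fin k → Fin m → α) :
    Sym2 (Vt n fn k q) → ℕ :=
  Sym2.lift ⟨pw fn q a c, pw_symm fn q a c⟩

end CapacitatedClusteringMatching

/-!
A perfect matching of `G` is a bijection from the left vertices onto the slots `v^i_j`. Fillers
weigh nothing and reach only the slots with `j ≥ p`, so what matters is where the columns go: an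
injective placement `ψ` of the columns into slots that fills every slot with `j < p`, of weight
`∑ₕ d_H(c_i, a_h)` where `ψ h` is a slot of bin `i`. Grouping the columns by bin gives clusters of
size between `p` and `q` (at most `q` slots per bin, all `p` low slots filled by columns).
Conversely, listing each cluster in the first slots of its bin yields such a `ψ`, and the
`qk - n` free slots are then matched with the fillers.
-/

open Function Set SimpleGraph
open scoped Finset

section Bipartite

variable {L R : Type*} {G : SimpleGraph (L ⊕ R)}

lemma SimpleGraph.Subgraph.IsPerfectMatching.exists_equiv
    (hG : G.IsBipartiteWith (range Sum.inl) (range Sum.inr)) {M : G.Subgraph}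
    (hM : M.IsPerfectMatching) : ∃ e : L ≃ R, ∀ x, M.Adj (.inl x) (.inr (e x)) := by
  have partner_inl (x : L) : ∃ r, M.Adj (.inl x) (.inr r) := by
    obtain ⟨w, hw, -⟩ := hM.1 (hM.2 (.inl x))
    obtain ⟨r, rfl⟩ := hG.mem_of_mem_adj (mem_range_self x) (M.adj_sub hw)
    exact ⟨r, hw⟩
  have partner_inr (r : R) : ∃ x, M.Adj (.inl x) (.inr r) := by
    obtain ⟨w, hw, -⟩ := hM.1 (hM.2 (.inr r))
    obtain ⟨x, rfl⟩ := hG.symm.mem_of_mem_adj (mem_range_self r) (M.adj_sub hw)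
    exact ⟨x, hw.symm⟩
  choose f hf using partner_inl
  choose g hg using partner_inr
  have unique {v w w' : L ⊕ R} (h : M.Adj v w) (h' : M.Adj v w') : w = w' :=
    (hM.1 (hM.2 v)).unique h h'
  refine ⟨⟨f, g, fun x => ?_, fun r => ?_⟩, hf⟩
  · exact Sum.inl_injective (unique (hg (f x)).symm (hf x).symm)
  · exact Sum.inr_injective (unique (hf (g r)) (hg r))

lemma SimpleGraph.Subgraph.IsMatching.edgeSet_eq_range {M : G.Subgraph} (hM : M.IsMatching)
    (e : L ≃ R) (he : ∀ x, M.Adj (.inl x) (.inr (e x))) :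
    M.edgeSet = range fun x => s(.inl x, .inr (e x)) := by
  ext z
  induction z using Sym2.ind with
  | _ v w =>
    simp only [Subgraph.mem_edgeSet, mem_range, Sym2.eq_iff]
    constructor
    · intro h
      rcases v with x | r
      · obtain rfl := (hM (M.edge_vert h)).unique h (he x)
        exact ⟨x, Or.inl ⟨rfl, rfl⟩⟩
      · have partner : M.Adj (.inr r) (.inl (e.symm r)) := by simpa using (he (e.symm r)).symm
        obtain rfl := (hM (M.edge_vert h)).unique h partner
        exact ⟨e.symm r, Or.inr ⟨rfl, by simp⟩⟩
    · rintro ⟨x, ⟨rfl, rfl⟩ | ⟨rfl, rfl⟩⟩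
      exacts [he x, (he x).symm]

lemma SimpleGraph.Subgraph.IsMatching.finsum_edgeSet_eq_sum {M' : Type*} [AddCommMonoid M']
    [Fintype L] {M : G.Subgraph} (hM : M.IsMatching) (e : L ≃ R)
    (he : ∀ x, M.Adj (.inl x) (.inr (e x))) (w : Sym2 (L ⊕ R) → M') :
    ∑ᶠ z ∈ M.edgeSet, w z = ∑ x, w s(.inl x, .inr (e x)) := by
  have hinj : Injective fun x => (s(.inl x, .inr (e x)) : Sym2 (L ⊕ R)) := by
    intro x y hxy
    simpa using hxy
  rw [Subgraph.IsMatching.edgeSet_eq_range hM e he, finsum_mem_range hinj,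
    finsum_eq_sum_of_fintype]

def SimpleGraph.Subgraph.ofEquiv (e : L ≃ R) (he : ∀ x, G.Adj (.inl x) (.inr (e x))) :
    G.Subgraph where
  verts := univ
  Adj v w := Sum.elim (Sum.inr ∘ e) (Sum.inl ∘ e.symm) v = w
  adj_sub := by
    rintro (x | r) _ rfl
    exacts [he x, by simpa using (he (e.symm r)).symm]
  edge_vert _ := mem_univ _
  symm := ⟨by rintro (x | r) _ rfl <;> simp⟩

lemma SimpleGraph.Subgraph.ofEquiv_adj_inl (e : L ≃ R) (he : ∀ x, G.Adj (.inl x) (.inr (e x)))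
    (x : L) : (Subgraph.ofEquiv e he).Adj (.inl x) (.inr (e x)) :=
  rfl

lemma SimpleGraph.Subgraph.isPerfectMatching_ofEquiv (e : L ≃ R)
    (he : ∀ x, G.Adj (.inl x) (.inr (e x))) : (Subgraph.ofEquiv e he).IsPerfectMatching :=
  Subgraph.isPerfectMatching_iff.2 fun _ => ⟨_, rfl, fun _ h => Eq.symm h⟩

end Bipartite

lemma Function.Injective.exists_sumEquiv_extend {α β γ : Type*} [Fintype α] [Fintype β]
    [Fintype γ] {ψ : α → β} (hψ : Injective ψ)
    (hcard : Fintype.card α + Fintype.card γ = Fintype.card β) :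
    ∃ e : α ⊕ γ ≃ β, (∀ x, e (.inl x) = ψ x) ∧ ∀ y, e (.inr y) ∉ range ψ := by
  classical
  have hcompl : Fintype.card γ = Fintype.card ↥(range ψ)ᶜ := by
    rw [Fintype.card_compl_set, Set.card_range_of_injective hψ]
    omega
  let eγ := Fintype.equivOfCardEq hcompl
  refine ⟨(Equiv.sumCongr (Equiv.ofInjective ψ hψ) eγ).trans (Equiv.Set.sumCompl _),
    fun x => rfl, fun y => (eγ y).2⟩

lemma exists_injective_fin_lt_mem_range {β : Type*} {p q : ℕ} [Fintype β]
    (hp : p ≤ Fintype.card β) (hq : Fintype.card β ≤ q) :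
    ∃ g : β → Fin q, Injective g ∧ ∀ j : Fin q, (j : ℕ) < p → j ∈ range g :=
  ⟨Fin.castLE hq ∘ Fintype.equivFin β, (Fin.castLE_injective hq).comp (Equiv.injective _),
    fun j hj => ⟨(Fintype.equivFin β).symm ⟨j, hj.trans_le hp⟩, by simp⟩⟩

lemma Finset.sum_fiberwise_apply {ι κ M : Type*} [AddCommMonoid M] [Fintype κ] [DecidableEq κ]
    (s : Finset ι) (g : ι → κ) (F : κ → ι → M) :
    ∑ j, ∑ i ∈ s with g i = j, F j i = ∑ i ∈ s, F (g i) i := by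
  rw [← sum_fiberwise s g fun i => F (g i) i]
  exact Finset.sum_congr rfl fun j _ => Finset.sum_congr rfl fun i hi => by
    rw [(Finset.mem_filter.1 hi).2]

lemma exists_partition_iff_exists_fibers {ι κ : Type*} [Fintype ι] [DecidableEq κ]
    (P : (κ → Finset ι) → Prop) :
    (∃ I : κ → Finset ι, (∀ i j, i ≠ j → Disjoint (I i) (I j)) ∧ (∀ x, ∃ i, x ∈ I i) ∧ P I) ↔
      ∃ f : ι → κ, P fun i => ({x | f x = i} : Finset ι) := by
  constructor
  · rintro ⟨I, hdisj, hcover, hP⟩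
    choose f hf using hcover
    have hI : I = fun i => ({x | f x = i} : Finset ι) := by
      ext i x
      simp only [Finset.mem_filter, Finset.mem_univ, true_and]
      refine ⟨fun hx => ?_, fun hx => hx ▸ hf x⟩
      by_contra hne
      exact Finset.disjoint_left.1 (hdisj _ _ hne) (hf x) hx
    exact ⟨f, hI ▸ hP⟩
  · rintro ⟨f, hP⟩
    refine ⟨_, fun i j hij => ?_, fun x => ⟨f x, by simp⟩, hP⟩
    exact Finset.disjoint_filter.2 fun x _ hi hj => hij (hi ▸ hj)

namespace CapacitatedClusteringMatching

section SlotAssignment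

variable {ι κ : Type*} {p q : ℕ}

-- What a perfect matching of `G` does to the columns: fillers reach only the slots `j ≥ p`,
-- so every slot `j < p` is taken by a column.
def IsSlotAssignment (p : ℕ) (ψ : ι → κ × Fin q) : Prop :=
  Injective ψ ∧ ∀ s : κ × Fin q, (s.2 : ℕ) < p → s ∈ range ψ

variable [Fintype ι] [DecidableEq κ]

lemma card_filter_fst_le_of_injective {ψ : ι → κ × Fin q} (hψ : Injective ψ) (i : κ) :
    #{x | (ψ x).1 = i} ≤ q := by
  simpa using Finset.card_le_card_of_injOn (fun x => (ψ x).2) (fun _ _ => Finset.mem_univ _)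
    fun x hx y hy hxy => hψ (Prod.ext (by simp_all) hxy)

lemma IsSlotAssignment.le_card_filter_fst {ψ : ι → κ × Fin q} (hψ : IsSlotAssignment p ψ)
    (hpq : p ≤ q) (i : κ) : p ≤ #{x | (ψ x).1 = i} := by
  choose g hg using fun j : Fin p => hψ.2 (i, Fin.castLE hpq j) (by simp)
  calc p = #(Finset.univ : Finset (Fin p)) := by simp
    _ ≤ #{x | (ψ x).1 = i} := Finset.card_le_card_of_injOn g (fun j _ => by simp [hg j])
      fun j _ j' _ hjj' => by
        have h := congrArg ψ hjj'
        rw [hg, hg, Prod.mk.injEq] at h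
        exact Fin.castLE_injective hpq h.2

lemma exists_isSlotAssignment_fst_eq {f : ι → κ}
    (hf : ∀ i, p ≤ #{x | f x = i} ∧ #{x | f x = i} ≤ q) :
    ∃ ψ : ι → κ × Fin q, IsSlotAssignment p ψ ∧ Prod.fst ∘ ψ = f := by
  have hfiber (i : κ) : ∃ g : {x // f x = i} → Fin q,
      Injective g ∧ ∀ j : Fin q, (j : ℕ) < p → j ∈ range g := by
    apply exists_injective_fin_lt_mem_range <;> simp [Fintype.card_subtype, hf i]
  choose g hg hrange using hfiber
  let ψ : ι → κ × Fin q :=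
    Equiv.sigmaEquivProd κ (Fin q) ∘ Sigma.map id g ∘ (Equiv.sigmaFiberEquiv f).symm
  refine ⟨ψ, ⟨?_, ?_⟩, rfl⟩
  · exact (Equiv.injective _).comp ((injective_id.sigma_map hg).comp (Equiv.injective _))
  · rintro ⟨i, j⟩ hj
    obtain ⟨⟨x, rfl⟩, hx⟩ := hrange i j hj
    exact ⟨x, by rw [← hx]; rfl⟩

end SlotAssignment

section AuxiliaryGraph

variable {n fn k q p : ℕ}

lemma G_isBipartiteWith : (G n fn k q p).IsBipartiteWith (range Sum.inl) (range Sum.inr) where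
  disjoint := isCompl_range_inl_range_inr.disjoint
  mem_of_adj := by
    rintro ((x | x) | r) ((y | y) | s) ⟨-, h | h⟩ <;> first | exact h.elim | simp

lemma G_adj_column (h : Fin n) (s : Fin k × Fin q) :
    (G n fn k q p).Adj (.inl (.inl h)) (.inr s) :=
  ⟨by simp, Or.inl trivial⟩

lemma G_adj_filler_iff (y : Fin fn) (s : Fin k × Fin q) :
    (G n fn k q p).Adj (.inl (.inr y)) (.inr s) ↔ p ≤ (s.2 : ℕ) :=
  ⟨fun ⟨_, h⟩ => h.resolve_right id, fun h => ⟨by simp, Or.inl h⟩⟩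

lemma finsum_edgeWeight_eq_sum_hammingDist {α : Type*} [DecidableEq α] {m : ℕ}
    (a : Fin n → Fin m → α) (c : Fin k → Fin m → α) {M : (G n fn k q p).Subgraph} (hM : M.IsMatching)
    (e : Fin n ⊕ Fin fn ≃ Fin k × Fin q) (he : ∀ x, M.Adj (.inl x) (.inr (e x))) :
    ∑ᶠ z ∈ M.edgeSet, edgeWeight fn q a c z =
      ∑ h, hammingDist (c (e (.inl h)).1) (a h) := by
  rw [Subgraph.IsMatching.finsum_edgeSet_eq_sum hM e he, Fintype.sum_sum_type]
  simp [edgeWeight, pw]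

end AuxiliaryGraph

lemma exists_perfectMatching_iff_exists_isSlotAssignment {α : Type*} [DecidableEq α]
    {m n k B p q : ℕ} (a : Fin n → Fin m → α) (c : Fin k → Fin m → α) :
    (∃ M : (G n (q * k - n) k q p).Subgraph, M.IsPerfectMatching ∧
        (∑ᶠ e ∈ M.edgeSet, edgeWeight (q * k - n) q a c e) ≤ B) ↔
      ∃ ψ : Fin n → Fin k × Fin q, IsSlotAssignment p ψ ∧
        ∑ h, hammingDist (c (ψ h).1) (a h) ≤ B := by
  constructor
  · rintro ⟨M, hM, hB⟩
    obtain ⟨e, he⟩ := hM.exists_equiv G_isBipartiteWith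
    refine ⟨e ∘ .inl, ⟨e.injective.comp Sum.inl_injective, fun s hs => ?_⟩, ?_⟩
    · rcases hx : e.symm s with h | y
      · exact ⟨h, by simp [← hx]⟩
      · have hadj := M.adj_sub (he (e.symm s))
        rw [Equiv.apply_symm_apply, hx, G_adj_filler_iff] at hadj
        exact absurd hs hadj.not_gt
    · rwa [finsum_edgeWeight_eq_sum_hammingDist a c hM.1 e he] at hB
  · rintro ⟨ψ, hψ, hB⟩
    have hcard := Fintype.card_le_of_injective ψ hψ.1
    simp only [Fintype.card_fin, Fintype.card_prod] at hcard
    obtain ⟨e, he_inl, he_inr⟩ := hψ.1.exists_sumEquiv_extend (γ := Fin (q * k - n))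
      (by simp only [Fintype.card_fin, Fintype.card_prod]; rw [mul_comm q]; omega)
    have hadj : ∀ x, (G n (q * k - n) k q p).Adj (.inl x) (.inr (e x)) := by
      rintro (h | y)
      · exact G_adj_column h _
      · exact (G_adj_filler_iff y _).2 (not_lt.1 fun hs => he_inr y (hψ.2 _ hs))
    refine ⟨_, Subgraph.isPerfectMatching_ofEquiv e hadj, ?_⟩
    rw [finsum_edgeWeight_eq_sum_hammingDist a c (Subgraph.isPerfectMatching_ofEquiv e hadj).1
      e (Subgraph.ofEquiv_adj_inl e hadj)]
    simpa only [he_inl] using hB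

theorem perfectMatching_iff_capacitatedClustering_general
    {α : Type*} [DecidableEq α]
    (m n k B p q : ℕ) (hpq : p ≤ q)
    (a : Fin n → Fin m → α) (c : Fin k → Fin m → α) :
    (∃ M : (G n (q * k - n) k q p).Subgraph, M.IsPerfectMatching ∧
        (∑ᶠ e ∈ M.edgeSet, edgeWeight (q * k - n) q a c e) ≤ B) ↔
    (∃ I : Fin k → Finset (Fin n),
      (∀ i j : Fin k, i ≠ j → Disjoint (I i) (I j)) ∧
      (∀ x : Fin n, ∃ i, x ∈ I i) ∧
      (∀ i : Fin k, p ≤ (I i).card ∧ (I i).card ≤ q) ∧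
      (∑ i, ∑ j ∈ I i, hammingDist (c i) (a j)) ≤ B) := by
  rw [exists_perfectMatching_iff_exists_isSlotAssignment,
    exists_partition_iff_exists_fibers fun I => (∀ i, p ≤ (I i).card ∧ (I i).card ≤ q) ∧
      ∑ i, ∑ j ∈ I i, hammingDist (c i) (a j) ≤ B]
  simp only [Finset.sum_fiberwise_apply]
  constructor
  · rintro ⟨ψ, hψ, hB⟩
    exact ⟨Prod.fst ∘ ψ,
      fun i => ⟨hψ.le_card_filter_fst hpq i, card_filter_fst_le_of_injective hψ.1 i⟩, hB⟩
  · rintro ⟨f, hf, hB⟩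
    obtain ⟨ψ, hψ, rfl⟩ := exists_isSlotAssignment_fst_eq hf
    exact ⟨ψ, hψ, hB⟩

/-- Given medians `c_1, ..., c_k`, the auxiliary bipartite graph has a
perfect matching of weight at most `B` if and only if there is a `k`-clustering
`{I_1, ..., I_k}` of `A` with `p ≤ |I_i| ≤ q` for all `i` and total cost (w.r.t. the
medians `c_1, ..., c_k`) at most `B`. -/
theorem perfectMatching_iff_capacitatedClustering
    {α : Type*} [Fintype α] [Nonempty α] [DecidableEq α]
    (m n k B p q : ℕ) (hm : 0 < m) (hn : 0 < n) (hk : 0 < k)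
    (hp : 0 < p) (hpq : p ≤ q) (hlow : p * k ≤ n) (hhigh : n ≤ q * k)
    (a : Fin n → Fin m → α) (c : Fin k → Fin m → α) :
    (∃ M : (G n (q * k - n) k q p).Subgraph, M.IsPerfectMatching ∧
        (∑ᶠ e ∈ M.edgeSet, edgeWeight (q * k - n) q a c e) ≤ B) ↔
    (∃ I : Fin k → Finset (Fin n),
      (∀ i j : Fin k, i ≠ j → Disjoint (I i) (I j)) ∧
      (∀ x : Fin n, ∃ i, x ∈ I i) ∧
      (∀ i : Fin k, p ≤ (I i).card ∧ (I i).card ≤ q) ∧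
      (∑ i, ∑ j ∈ I i, hammingDist (c i) (a j)) ≤ B) :=
  perfectMatching_iff_capacitatedClustering_general m n k B p q hpq a c

end CapacitatedClusteringMatching
end
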